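/- Let a > b ≥ 1 be integers, U ⊆ ℂⁿ open, f : U → ℂ holomorphic, φ_{a,b}(w) = (w₁^a conj(w₁)^b, …, wₙ^a conj(wₙ)^b), and g = f ∘ φ_{a,b}. Fix w ∈ ℂⁿ \ {0} with φ_{a,b}(w) ∈ U. Define v₁ = g(w)·( conj(g_{w_1}(w)), …, conj(g_{w_n}(w)) ) and v₂ = conj(g(w))·( g_{w̄_1}(w), …, g_{w̄_n}(w) ), and let π : ℂⁿ → ℂⁿ be the hermitian-orthogonal projection onto the orthogonal complement of the complex line ℂ·w. Then ‖π(v₁)‖² − ‖π(v₂)‖² = (a² − b²)·|g(w)|²·( γ − β/‖w‖² ) ≥ 0, where γ = Σ_j |(∂f/∂z_j)(φ_{a,b}(w))|²·|w_j|^{2(a+b−1)} and β = |Σ_j (∂f/∂z_j)(φ_{a,b}(w))·w_j^a·conj(w_j)^b|². Moreover, if g(w) ≠ 0, then equality holds if and only if both (conj(g_{w_1}(w)),…,conj(g_{w_n}(w))) and (g_{w̄_1}(w),…,g_{w̄_n}(w)) are complex scalar multiples of w. -/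

import Mathlib

open Complex ComplexConjugate

/-- The Wirtinger derivative `∂g/∂w_j` of a real-differentiable map
`g : EuclideanSpace ℂ (Fin n) → ℂ`. -/
noncomputable def wdzE {n : ℕ} (g : EuclideanSpace ℂ (Fin n) → ℂ)
    (w : EuclideanSpace ℂ (Fin n)) (j : Fin n) : ℂ :=
  (1 / 2 : ℂ) * (fderiv ℝ g w (EuclideanSpace.single j 1)
    - Complex.I * fderiv ℝ g w (EuclideanSpace.single j Complex.I))

/-- The Wirtinger derivative `∂g/∂w̄_j` of a real-differentiable map
`g : EuclideanSpace ℂ (Fin n) → ℂ`. -/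
noncomputable def wdzbarE {n : ℕ} (g : EuclideanSpace ℂ (Fin n) → ℂ)
    (w : EuclideanSpace ℂ (Fin n)) (j : Fin n) : ℂ :=
  (1 / 2 : ℂ) * (fderiv ℝ g w (EuclideanSpace.single j 1)
    + Complex.I * fderiv ℝ g w (EuclideanSpace.single j Complex.I))

/-- The homogeneous mixed covering `φ_{a,b}(w) = (w₁^a conj(w₁)^b, …, wₙ^a conj(wₙ)^b)`. -/
noncomputable def phiabE {n : ℕ} (a b : ℕ) (w : EuclideanSpace ℂ (Fin n)) :
    EuclideanSpace ℂ (Fin n) :=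
  WithLp.toLp 2 (fun j => w j ^ a * conj (w j) ^ b)

/-!
Write `F_j = ∂f/∂z_j(φ_{a,b}(w))`. By the chain rule `conj g_{w_j} = a P_j` and
`g_{w̄_j} = b Q_j`, where `P_j = conj F_j · w_j^b · w̄_j^(a-1)` and
`Q_j = F_j · w_j^a · w̄_j^(b-1)`. The coordinates of `P` and `Q` have equal moduli and
`Q_j w̄_j = conj P_j · w_j`, so `‖Q‖ = ‖P‖` and `⟨w, Q⟩ = conj ⟨w, P⟩`; hence `P` and `Q` have
projections onto `(ℂ w)ᗮ` of the same norm, and Pythagoras identifies its square with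
`γ - β / ‖w‖²`. The difference of the squared norms is therefore `(a² - b²) |g(w)|² ‖π P‖²`,
which vanishes exactly when `P ∈ ℂ w`, and in that case also `Q ∈ ℂ w`.
-/

section Projection

variable {𝕜 E : Type*} [RCLike 𝕜] [NormedAddCommGroup E] [InnerProductSpace 𝕜 E]

theorem norm_orthogonalProjectionOnto_singleton (w v : E) :
    ‖(𝕜 ∙ w).orthogonalProjectionOnto v‖ = ‖(inner 𝕜 w v : 𝕜)‖ / ‖w‖ := by
  rw [← Submodule.norm_coe, Submodule.coe_orthogonalProjectionOnto_apply,
    Submodule.starProjection_singleton, norm_smul, norm_div, RCLike.norm_ofReal,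
    abs_of_nonneg (by positivity)]
  rcases eq_or_ne w 0 with rfl | hw
  · simp
  · field_simp

theorem norm_sq_orthogonalProjectionOnto_orthogonal_singleton (w v : E) :
    ‖(𝕜 ∙ w)ᗮ.orthogonalProjectionOnto v‖ ^ 2 = ‖v‖ ^ 2 - ‖(inner 𝕜 w v : 𝕜)‖ ^ 2 / ‖w‖ ^ 2 := by
  rw [Submodule.norm_sq_eq_add_norm_sq_projection v (𝕜 ∙ w),
    norm_orthogonalProjectionOnto_singleton, div_pow]
  ring

theorem orthogonalProjectionOnto_orthogonal_singleton_eq_zero_iff (w v : E) :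
    (𝕜 ∙ w)ᗮ.orthogonalProjectionOnto v = 0 ↔ ∃ c : 𝕜, c • w = v := by
  rw [Submodule.orthogonalProjectionOnto_eq_zero_iff, Submodule.orthogonal_orthogonal,
    Submodule.mem_span_singleton]

end Projection

structure ConjTwisted {ι : Type*} (w p q : EuclideanSpace ℂ ι) : Prop where
  norm_apply_eq : ∀ j, ‖q j‖ = ‖p j‖
  mul_conj_eq : ∀ j, q j * conj (w j) = conj (p j) * w j

namespace ConjTwisted

variable {ι : Type*} {p q w : EuclideanSpace ℂ ι}

theorem norm_eq [Fintype ι] (h : ConjTwisted w p q) : ‖q‖ = ‖p‖ := by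
  simp only [EuclideanSpace.norm_eq, h.norm_apply_eq]

theorem inner_eq [Fintype ι] (h : ConjTwisted w p q) :
    (inner ℂ w q : ℂ) = conj (inner ℂ w p : ℂ) := by
  simp only [PiLp.inner_apply, RCLike.inner_apply, map_sum, map_mul, Complex.conj_conj]
  exact Finset.sum_congr rfl fun j _ => by linear_combination h.mul_conj_eq j

theorem norm_orthogonalProjectionOnto_eq [Fintype ι] (h : ConjTwisted w p q) :
    ‖(ℂ ∙ w)ᗮ.orthogonalProjectionOnto q‖ = ‖(ℂ ∙ w)ᗮ.orthogonalProjectionOnto p‖ := by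
  rw [← sq_eq_sq₀ (norm_nonneg _) (norm_nonneg _),
    norm_sq_orthogonalProjectionOnto_orthogonal_singleton,
    norm_sq_orthogonalProjectionOnto_orthogonal_singleton, h.norm_eq, h.inner_eq,
    Complex.norm_conj]

theorem conj_smul_eq (h : ConjTwisted w p q) {c : ℂ} (hp : c • w = p) : conj c • w = q := by
  ext j
  have hpj : p j = c * w j := by rw [← hp]; rfl
  rcases eq_or_ne (w j) 0 with hw | hw
  · have hqj := h.norm_apply_eq j
    rw [hpj, hw, mul_zero, norm_zero, norm_eq_zero] at hqj
    simp [hw, hqj]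
  · have hqj := h.mul_conj_eq j
    rw [hpj, map_mul] at hqj
    simp only [PiLp.smul_apply, smul_eq_mul]
    apply mul_right_cancel₀ ((map_ne_zero conj).2 hw)
    linear_combination -hqj

theorem exists_smul_eq_iff (h : ConjTwisted w p q) {s : ℂ} (hs : s ≠ 0) (t : ℂ) :
    (∃ c : ℂ, c • w = p) ↔
      (∃ c₁ : ℂ, ∀ j, s * p j = c₁ * w j) ∧ ∃ c₂ : ℂ, ∀ j, t * q j = c₂ * w j := by
  constructor
  · rintro ⟨c, hcp⟩
    have hcq : conj c • w = q := h.conj_smul_eq hcp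
    refine ⟨⟨s * c, fun j => ?_⟩, ⟨t * conj c, fun j => ?_⟩⟩
    · rw [← hcp]; simp [mul_assoc]
    · rw [← hcq]; simp [mul_assoc]
  · rintro ⟨⟨c, hc⟩, -⟩
    refine ⟨c / s, ?_⟩
    ext j
    rw [PiLp.smul_apply, smul_eq_mul, div_mul_eq_mul_div, div_eq_iff hs, ← hc, mul_comm]

end ConjTwisted

section MixedMonomial

variable {ι : Type*} (F : ι → ℂ) (w : EuclideanSpace ℂ ι)

noncomputable def mixedMonomial (k l : ℕ) : EuclideanSpace ℂ ι :=
  WithLp.toLp 2 fun j => F j * w j ^ k * conj (w j) ^ l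

@[simp]
theorem mixedMonomial_apply (k l : ℕ) (j : ι) :
    mixedMonomial F w k l j = F j * w j ^ k * conj (w j) ^ l := rfl

theorem norm_mixedMonomial_apply (k l : ℕ) (j : ι) :
    ‖mixedMonomial F w k l j‖ = ‖F j‖ * ‖w j‖ ^ (k + l) := by
  simp [pow_add, mul_assoc]

theorem norm_sq_mixedMonomial [Fintype ι] (k l : ℕ) :
    ‖mixedMonomial F w k l‖ ^ 2 = ∑ j, ‖F j‖ ^ 2 * ‖w j‖ ^ (2 * (k + l)) := by
  simp only [EuclideanSpace.norm_sq_eq, norm_mixedMonomial_apply, mul_pow, ← pow_mul, mul_comm]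

theorem inner_mixedMonomial [Fintype ι] (k l : ℕ) :
    (inner ℂ w (mixedMonomial F w k l) : ℂ) = ∑ j, F j * w j ^ k * conj (w j) ^ (l + 1) := by
  simp only [PiLp.inner_apply, RCLike.inner_apply, mixedMonomial_apply, pow_succ]
  exact Finset.sum_congr rfl fun j _ => by ring

theorem conjTwisted_mixedMonomial {a b : ℕ} (ha : 1 ≤ a) (hb : 1 ≤ b) :
    ConjTwisted w (mixedMonomial (fun i => conj (F i)) w b (a - 1))
      (mixedMonomial F w a (b - 1)) where
  norm_apply_eq j := by
    rw [norm_mixedMonomial_apply, norm_mixedMonomial_apply, Complex.norm_conj]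
    congr 2
    omega
  mul_conj_eq j := by
    obtain ⟨k, rfl⟩ : ∃ k, a = k + 1 := ⟨a - 1, by omega⟩
    obtain ⟨l, rfl⟩ : ∃ l, b = l + 1 := ⟨b - 1, by omega⟩
    simp only [mixedMonomial_apply, map_mul, map_pow, Complex.conj_conj, add_tsub_cancel_right]
    ring

end MixedMonomial

section Wirtinger

variable {n : ℕ} {g : EuclideanSpace ℂ (Fin n) → ℂ} {w : EuclideanSpace ℂ (Fin n)} {j : Fin n}
  {α β : ℂ}

theorem wdzE_eq_of_fderiv_single
    (h : ∀ c, fderiv ℝ g w (EuclideanSpace.single j c) = α * c + β * conj c) :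
    wdzE g w j = α := by
  rw [wdzE, h, h, map_one, conj_I]
  linear_combination (β - α) / 2 * I_sq

theorem wdzbarE_eq_of_fderiv_single
    (h : ∀ c, fderiv ℝ g w (EuclideanSpace.single j c) = α * c + β * conj c) :
    wdzbarE g w j = β := by
  rw [wdzbarE, h, h, map_one, conj_I]
  linear_combination (α - β) / 2 * I_sq

end Wirtinger

theorem hasFDerivAt_pow_mul_conj_pow (a b : ℕ) (z : ℂ) :
    HasFDerivAt (fun z : ℂ => z ^ a * conj z ^ b)
      (((a : ℂ) * z ^ (a - 1) * conj z ^ b) • ContinuousLinearMap.id ℝ ℂ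
        + ((b : ℂ) * z ^ a * conj z ^ (b - 1)) • (conjCLE : ℂ →L[ℝ] ℂ)) z := by
  have hconj : HasFDerivAt (fun z : ℂ => conj z) (conjCLE : ℂ →L[ℝ] ℂ) z :=
    conjCLE.hasFDerivAt
  refine ((hasFDerivAt_pow (𝕜 := ℝ) a).mul (hconj.pow b)).congr_fderiv ?_
  ext c
  simp only [nsmul_eq_mul, add_apply, smul_apply, ContinuousLinearEquiv.coe_coe,
    ContinuousAlgEquiv.coeCLE_apply, conjCAE_apply, smul_eq_mul, ContinuousLinearMap.id_apply]
  ring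

section Pullback

variable {n : ℕ} (a b : ℕ)

theorem differentiableAt_phiabE (w : EuclideanSpace ℂ (Fin n)) :
    DifferentiableAt ℝ (phiabE a b) w :=
  (differentiableAt_piLp 2).2 fun i =>
    ((hasFDerivAt_pow_mul_conj_pow a b (w i)).comp w
      (PiLp.hasFDerivAt_apply (𝕜 := ℝ) 2 w i) :).differentiableAt

theorem fderiv_phiabE_apply (w v : EuclideanSpace ℂ (Fin n)) (i : Fin n) :
    fderiv ℝ (phiabE a b) w v i
      = (a : ℂ) * w i ^ (a - 1) * conj (w i) ^ b * v i
        + (b : ℂ) * w i ^ a * conj (w i) ^ (b - 1) * conj (v i) := by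
  have hcoord := ((hasFDerivWithinAt_piLp 2).1
    (differentiableAt_phiabE a b w).hasFDerivAt.hasFDerivWithinAt i).hasFDerivAt Filter.univ_mem
  have hmono :=
    (hasFDerivAt_pow_mul_conj_pow a b (w i)).comp w (PiLp.hasFDerivAt_apply (𝕜 := ℝ) 2 w i)
  simpa [mul_assoc] using congrArg (fun L => L v) (hcoord.unique hmono)

variable {f : EuclideanSpace ℂ (Fin n) → ℂ} {w : EuclideanSpace ℂ (Fin n)}

theorem fderiv_comp_phiabE_single (hf : DifferentiableAt ℂ f (phiabE a b w)) (j : Fin n)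
    (c : ℂ) :
    fderiv ℝ (fun w => f (phiabE a b w)) w (EuclideanSpace.single j c)
      = (a : ℂ) * w j ^ (a - 1) * conj (w j) ^ b
          * fderiv ℂ f (phiabE a b w) (EuclideanSpace.single j 1) * c
        + (b : ℂ) * w j ^ a * conj (w j) ^ (b - 1)
          * fderiv ℂ f (phiabE a b w) (EuclideanSpace.single j 1) * conj c := by
  have hφ : fderiv ℝ (phiabE a b) w (EuclideanSpace.single j c)
      = EuclideanSpace.single j ((a : ℂ) * w j ^ (a - 1) * conj (w j) ^ b * c
        + (b : ℂ) * w j ^ a * conj (w j) ^ (b - 1) * conj c) := by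
    ext i
    rw [fderiv_phiabE_apply]
    rcases eq_or_ne i j with rfl | h
    · simp
    · simp [h]
  have hsingle : ∀ x : ℂ, EuclideanSpace.single j x = x • EuclideanSpace.single j (1 : ℂ) := by
    intro x
    ext i
    rcases eq_or_ne i j with rfl | h <;> simp [*]
  rw [fderiv_fun_comp w (hf.restrictScalars ℝ) (differentiableAt_phiabE a b w),
    hf.fderiv_restrictScalars ℝ, ContinuousLinearMap.comp_apply, hφ, hsingle,
    ContinuousLinearMap.coe_restrictScalars', map_smul, smul_eq_mul]
  ring

theorem conj_wdzE_comp_phiabE (hf : DifferentiableAt ℂ f (phiabE a b w)) (j : Fin n) :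
    conj (wdzE (fun w => f (phiabE a b w)) w j)
      = a * mixedMonomial (fun i => conj (fderiv ℂ f (phiabE a b w) (EuclideanSpace.single i 1)))
          w b (a - 1) j := by
  rw [wdzE_eq_of_fderiv_single (fderiv_comp_phiabE_single a b hf j)]
  simp only [map_mul, map_pow, map_natCast, Complex.conj_conj, mixedMonomial_apply]
  ring

theorem wdzbarE_comp_phiabE (hf : DifferentiableAt ℂ f (phiabE a b w)) (j : Fin n) :
    wdzbarE (fun w => f (phiabE a b w)) w j
      = b * mixedMonomial (fun i => fderiv ℂ f (phiabE a b w) (EuclideanSpace.single i 1))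
          w a (b - 1) j := by
  rw [wdzbarE_eq_of_fderiv_single (fderiv_comp_phiabE_single a b hf j), mixedMonomial_apply]
  ring

end Pullback

theorem norm_sq_projection_difference_general (n : ℕ) (a b : ℕ) (hb : 1 ≤ b) (hab : b < a)
    (U : Set (EuclideanSpace ℂ (Fin n)))
    (f : EuclideanSpace ℂ (Fin n) → ℂ) (hf : ∀ z ∈ U, DifferentiableAt ℂ f z)
    (w : EuclideanSpace ℂ (Fin n)) (hw : phiabE a b w ∈ U)
    (g : EuclideanSpace ℂ (Fin n) → ℂ) (hg : g = fun w => f (phiabE a b w))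
    (v₁ v₂ : EuclideanSpace ℂ (Fin n))
    (hv₁ : ∀ j, v₁ j = g w * conj (wdzE g w j))
    (hv₂ : ∀ j, v₂ j = conj (g w) * wdzbarE g w j)
    (γ β : ℝ)
    (hγ : γ = ∑ j, ‖fderiv ℂ f (phiabE a b w) (EuclideanSpace.single j 1)‖ ^ 2
      * ‖w j‖ ^ (2 * (a + b - 1)))
    (hβ : β = ‖∑ j, fderiv ℂ f (phiabE a b w) (EuclideanSpace.single j 1)
      * w j ^ a * conj (w j) ^ b‖ ^ 2) :
    (‖(ℂ ∙ w)ᗮ.orthogonalProjectionOnto v₁‖ ^ 2 - ‖(ℂ ∙ w)ᗮ.orthogonalProjectionOnto v₂‖ ^ 2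
        = ((a : ℝ) ^ 2 - (b : ℝ) ^ 2) * ‖g w‖ ^ 2 * (γ - β / ‖w‖ ^ 2)) ∧
    (0 ≤ ‖(ℂ ∙ w)ᗮ.orthogonalProjectionOnto v₁‖ ^ 2 - ‖(ℂ ∙ w)ᗮ.orthogonalProjectionOnto v₂‖ ^ 2) ∧
    (g w ≠ 0 →
      (‖(ℂ ∙ w)ᗮ.orthogonalProjectionOnto v₁‖ ^ 2 - ‖(ℂ ∙ w)ᗮ.orthogonalProjectionOnto v₂‖ ^ 2 = 0 ↔
        (∃ lam₁ : ℂ, ∀ j, conj (wdzE g w j) = lam₁ * w j) ∧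
        (∃ lam₂ : ℂ, ∀ j, wdzbarE g w j = lam₂ * w j))) := by
  have ha : 1 ≤ a := hb.trans hab.le
  have hfw := hf _ hw
  set F := fun j => fderiv ℂ f (phiabE a b w) (EuclideanSpace.single j 1)
  set P := mixedMonomial (fun j => conj (F j)) w b (a - 1)
  set Q := mixedMonomial F w a (b - 1)
  set π := (ℂ ∙ w)ᗮ.orthogonalProjectionOnto
  have hdz : ∀ j, conj (wdzE g w j) = a * P j := hg ▸ conj_wdzE_comp_phiabE a b hfw
  have hdzb : ∀ j, wdzbarE g w j = b * Q j := hg ▸ wdzbarE_comp_phiabE a b hfw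
  have hPQ : ConjTwisted w P Q := conjTwisted_mixedMonomial F w ha hb
  have hπP : γ - β / ‖w‖ ^ 2 = ‖π P‖ ^ 2 := by
    rw [← hPQ.norm_orthogonalProjectionOnto_eq,
      norm_sq_orthogonalProjectionOnto_orthogonal_singleton, norm_sq_mixedMonomial,
      inner_mixedMonomial, Nat.sub_add_cancel hb, hγ, hβ, Nat.add_sub_assoc hb]
  have key : ‖π v₁‖ ^ 2 - ‖π v₂‖ ^ 2 = ((a : ℝ) ^ 2 - (b : ℝ) ^ 2) * ‖g w‖ ^ 2 * ‖π P‖ ^ 2 := by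
    have hv₁P : v₁ = (g w * a) • P := by ext j; rw [hv₁, hdz]; simp [mul_assoc]
    have hv₂Q : v₂ = (conj (g w) * b) • Q := by ext j; rw [hv₂, hdzb]; simp [mul_assoc]
    rw [hv₁P, hv₂Q, map_smul, map_smul, norm_smul, norm_smul, hPQ.norm_orthogonalProjectionOnto_eq]
    simp only [norm_mul, Complex.norm_conj, Complex.norm_natCast]
    ring
  have hab2 : 0 < (a : ℝ) ^ 2 - (b : ℝ) ^ 2 :=
    sub_pos.2 (pow_lt_pow_left₀ (by exact_mod_cast hab) (by positivity) two_ne_zero)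
  refine ⟨by rw [key, hπP], by rw [key]; positivity, fun hg0 => ?_⟩
  have hgab : ((a : ℝ) ^ 2 - (b : ℝ) ^ 2) * ‖g w‖ ^ 2 ≠ 0 := by positivity
  rw [key, mul_eq_zero, or_iff_right hgab, pow_eq_zero_iff two_ne_zero, norm_eq_zero,
    orthogonalProjectionOnto_orthogonal_singleton_eq_zero_iff]
  simp only [hdz, hdzb]
  exact hPQ.exists_smul_eq_iff (by exact_mod_cast (by omega : a ≠ 0)) b

/-- For the pull-back `g = f ∘ φ_{a,b}` of a holomorphic function `f` (with `a > b ≥ 1`),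
setting `v₁ = g(w)·conj ∇_∂ g(w)`, `v₂ = conj(g(w))·∇_∂̄ g(w)` and `π` the hermitian
orthogonal projection onto `(ℂ·w)ᗮ`, one has
`‖π v₁‖² − ‖π v₂‖² = (a²−b²)|g(w)|²(γ − β/‖w‖²) ≥ 0`; moreover if `g(w) ≠ 0`, equality
holds iff `conj ∇_∂ g(w)` and `∇_∂̄ g(w)` are complex scalar multiples of `w`. -/
theorem norm_sq_projection_difference (n : ℕ) (a b : ℕ) (hb : 1 ≤ b) (hab : b < a)
    (U : Set (EuclideanSpace ℂ (Fin n))) (hU : IsOpen U)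
    (f : EuclideanSpace ℂ (Fin n) → ℂ) (hf : ∀ z ∈ U, DifferentiableAt ℂ f z)
    (w : EuclideanSpace ℂ (Fin n)) (hw0 : w ≠ 0) (hw : phiabE a b w ∈ U)
    (g : EuclideanSpace ℂ (Fin n) → ℂ) (hg : g = fun w => f (phiabE a b w))
    (v₁ v₂ : EuclideanSpace ℂ (Fin n))
    (hv₁ : ∀ j, v₁ j = g w * conj (wdzE g w j))
    (hv₂ : ∀ j, v₂ j = conj (g w) * wdzbarE g w j)
    (γ β : ℝ)
    (hγ : γ = ∑ j, ‖fderiv ℂ f (phiabE a b w) (EuclideanSpace.single j 1)‖ ^ 2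
      * ‖w j‖ ^ (2 * (a + b - 1)))
    (hβ : β = ‖∑ j, fderiv ℂ f (phiabE a b w) (EuclideanSpace.single j 1)
      * w j ^ a * conj (w j) ^ b‖ ^ 2) :
    (‖(ℂ ∙ w)ᗮ.orthogonalProjectionOnto v₁‖ ^ 2 - ‖(ℂ ∙ w)ᗮ.orthogonalProjectionOnto v₂‖ ^ 2
        = ((a : ℝ) ^ 2 - (b : ℝ) ^ 2) * ‖g w‖ ^ 2 * (γ - β / ‖w‖ ^ 2)) ∧
    (0 ≤ ‖(ℂ ∙ w)ᗮ.orthogonalProjectionOnto v₁‖ ^ 2 - ‖(ℂ ∙ w)ᗮ.orthogonalProjectionOnto v₂‖ ^ 2) ∧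
    (g w ≠ 0 →
      (‖(ℂ ∙ w)ᗮ.orthogonalProjectionOnto v₁‖ ^ 2 - ‖(ℂ ∙ w)ᗮ.orthogonalProjectionOnto v₂‖ ^ 2 = 0 ↔
        (∃ lam₁ : ℂ, ∀ j, conj (wdzE g w j) = lam₁ * w j) ∧
        (∃ lam₂ : ℂ, ∀ j, wdzbarE g w j = lam₂ * w j))) :=
  norm_sq_projection_difference_general n a b hb hab U f hf w hw g hg v₁ v₂ hv₁ hv₂ γ β hγ hβ
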